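/- Let V be a finite set, J a multigraph on V, k an integer, and μ = ⌈(k−3)/2⌉. Let R be a finite laminar family of subsets of V and S ⊆ V with 1 ≤ |R(S)| ≤ |R(V\S)|. Assume: (i) for every inclusion-minimal member R of R(S), d_J(R∩S, R\S) ≥ μ; (ii) if R(S) has a unique maximal member R (one containing all other members of R(S)), then 2·d_J((V\R)∩S, (V\R)\S) ≥ k − 6. Then d_J(S) ≥ k − 4. -/

import Mathlib

open Finset

variable {V : Type*} [Fintype V] [DecidableEq V]

/-- `d_m(S,T)`: total multiplicity of edges of the multigraph `m` with one end in `S` and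
the other in `T` (for disjoint `S`, `T`). -/
def dBetween (m : V → V → ℕ) (S T : Finset V) : ℕ := ∑ u ∈ S, ∑ v ∈ T, m u v

/-- `d_m(S) = d_m(S, V \ S)`. -/
def degS (m : V → V → ℕ) (S : Finset V) : ℕ := dBetween m S Sᶜ

/-- A family of sets is laminar if any two members are either disjoint or nested. -/
def LaminarF (F : Finset (Finset V)) : Prop :=
  ∀ A ∈ F, ∀ B ∈ F, Disjoint A B ∨ A ⊆ B ∨ B ⊆ A

/-- `R(S)`: the members of the family `R` that overlap `S`, i.e. those `A ∈ R` with
`A ∩ S`, `A \ S` and `S \ A` all nonempty. -/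
def overlapFam (R : Finset (Finset V)) (S : Finset V) : Finset (Finset V) :=
  R.filter fun A => (A ∩ S).Nonempty ∧ (A \ S).Nonempty ∧ (S \ A).Nonempty

/-!
The sets `X ∩ S` for pairwise disjoint `X` are disjoint parts of `S`, so the cuts
`d_J(X ∩ S, X \ S)` add up to at most `d_J(S)`. In the laminar family `R(S)` either two
minimal members are disjoint, each contributing `μ ≥ (k - 3) / 2`, or some minimal member lies in
every member; then `R(S)` is a chain, its top `A` is the unique maximal member, and a minimal
member together with `Aᶜ` contributes at least `(k - 3) / 2 + (k - 6) / 2 = k - 9 / 2`, which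
rounds up to `k - 4`.
-/

lemma dBetween_mono {α : Type*} (J : α → α → ℕ) {S T S' T' : Finset α} (hS : S ⊆ S')
    (hT : T ⊆ T') :
    dBetween J S T ≤ dBetween J S' T' :=
  (sum_le_sum fun _ _ => sum_le_sum_of_subset hT).trans (sum_le_sum_of_subset hS)

lemma dBetween_inter_sdiff_add_le_degS (J : V → V → ℕ) {A B : Finset V} (S : Finset V)
    (hAB : Disjoint A B) :
    dBetween J (A ∩ S) (A \ S) + dBetween J (B ∩ S) (B \ S) ≤ degS J S := by
  have hsdiff : ∀ X : Finset V, X \ S ⊆ Sᶜ := fun X _ hx => mem_compl.mpr (mem_sdiff.mp hx).2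
  calc dBetween J (A ∩ S) (A \ S) + dBetween J (B ∩ S) (B \ S)
      ≤ dBetween J (A ∩ S) Sᶜ + dBetween J (B ∩ S) Sᶜ :=
        add_le_add (dBetween_mono J le_rfl (hsdiff A)) (dBetween_mono J le_rfl (hsdiff B))
    _ = dBetween J (A ∩ S ∪ B ∩ S) Sᶜ :=
        (sum_union (hAB.mono inter_subset_left inter_subset_left)).symm
    _ ≤ degS J S := dBetween_mono J (union_subset inter_subset_right inter_subset_right) le_rfl

lemma inter_nonempty_of_mem_overlapFam {α : Type*} [DecidableEq α] {R : Finset (Finset α)}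
    {S A : Finset α} (hA : A ∈ overlapFam R S) : (A ∩ S).Nonempty :=
  (mem_filter.mp hA).2.1

namespace LaminarF

variable {α : Type*} {F G : Finset (Finset α)} {A B C : Finset α}

lemma mono (hG : LaminarF G) (hFG : F ⊆ G) : LaminarF F :=
  fun A hA B hB => hG A (hFG hA) B (hFG hB)

lemma disjoint_of_minimal (hF : LaminarF F) (hA : Minimal (· ∈ F) A) (hB : Minimal (· ∈ F) B)
    (hAB : A ≠ B) : Disjoint A B := by
  rcases hF A hA.1 B hB.1 with h | h | h
  · exact h
  · exact absurd (hB.eq_of_le hA.1 h) hAB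
  · exact absurd (hA.eq_of_le hB.1 h).symm hAB

lemma subset_of_maximal (hF : LaminarF F) (hA : Maximal (· ∈ F) A) (hC : C ∈ F)
    (hCA : ¬ Disjoint C A) : C ⊆ A := by
  rcases hF C hC A hA.1 with h | h | h
  · exact absurd h hCA
  · exact h
  · exact (hA.eq_of_ge hC h).le

lemma exists_disjoint_minimal_or_exists_top (hF : LaminarF F) (hF₀ : F.Nonempty)
    (hne : ∀ A ∈ F, A.Nonempty) :
    (∃ B B', Minimal (· ∈ F) B ∧ Minimal (· ∈ F) B' ∧ Disjoint B B') ∨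
      ∃ A ∈ F, ∀ C ∈ F, C ⊆ A := by
  obtain ⟨B, hB⟩ := exists_minimal hF₀
  by_cases hbot : ∀ C ∈ F, B ⊆ C
  · obtain ⟨A, hA⟩ := exists_maximal hF₀
    obtain ⟨b, hb⟩ := hne B hB.1
    refine .inr ⟨A, hA.1, fun C hC => hF.subset_of_maximal hA hC fun hCA => ?_⟩
    exact disjoint_left.mp hCA (hbot C hC hb) (hbot A hA.1 hb)
  · obtain ⟨C, hC, hBC⟩ := not_forall₂.mp hbot
    obtain ⟨B', hB'C, hB'⟩ := F.exists_le_minimal hC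
    have hBB' : B ≠ B' := by
      rintro rfl
      exact hBC hB'C
    exact .inl ⟨B, B', hB, hB', hF.disjoint_of_minimal hB hB' hBB'⟩

end LaminarF

lemma sub_three_le_two_mul_ceil (k : ℤ) : k - 3 ≤ 2 * ⌈((k : ℚ) - 3) / 2⌉ := by
  have h := Int.le_ceil (((k : ℚ) - 3) / 2)
  exact_mod_cast (by linarith : (k : ℚ) - 3 ≤ 2 * ⌈((k : ℚ) - 3) / 2⌉)

theorem degree_bound_overlapping_cut_general
    (J : V → V → ℕ)
    (k : ℤ) (μ : ℤ) (hμ : μ = ⌈((k : ℚ) - 3) / 2⌉)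
    (R : Finset (Finset V)) (hlam : LaminarF R) (S : Finset V)
    (h1 : 1 ≤ (overlapFam R S).card)
    (hmin : ∀ A ∈ overlapFam R S, (∀ B ∈ overlapFam R S, ¬ B ⊂ A) →
      μ ≤ (dBetween J (A ∩ S) (A \ S) : ℤ))
    (hmax : ∀ A ∈ overlapFam R S, (∀ B ∈ overlapFam R S, B ⊆ A) →
      k - 6 ≤ 2 * (dBetween J (Aᶜ ∩ S) (Aᶜ \ S) : ℤ)) :
    k - 4 ≤ (degS J S : ℤ) := by
  set F := overlapFam R S
  have hF₀ : F.Nonempty := card_pos.mp h1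
  have hμk : k - 3 ≤ 2 * μ := hμ ▸ sub_three_le_two_mul_ceil k
  have hmin' : ∀ B, Minimal (· ∈ F) B → μ ≤ (dBetween J (B ∩ S) (B \ S) : ℤ) :=
    fun B hB => hmin B hB.1 fun C hC => hB.not_lt hC
  rcases (hlam.mono (filter_subset _ R)).exists_disjoint_minimal_or_exists_top hF₀
      fun A hA => (inter_nonempty_of_mem_overlapFam hA).mono inter_subset_left with
    ⟨B, B', hB, hB', hBB'⟩ | ⟨A, hA, htop⟩
  · have hcut : (dBetween J (B ∩ S) (B \ S) + dBetween J (B' ∩ S) (B' \ S) : ℤ) ≤ degS J S := by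
      exact_mod_cast dBetween_inter_sdiff_add_le_degS J S hBB'
    linarith [hmin' B hB, hmin' B' hB']
  · obtain ⟨B, hB⟩ := exists_minimal hF₀
    have hBA : Disjoint B Aᶜ := disjoint_compl_right.mono_left (htop B hB.1)
    have hcut : (dBetween J (B ∩ S) (B \ S) + dBetween J (Aᶜ ∩ S) (Aᶜ \ S) : ℤ) ≤ degS J S := by
      exact_mod_cast dBetween_inter_sdiff_add_le_degS J S hBA
    have hB_cut := hmin' B hB
    have hA_cut := hmax A hA htop
    omega

/-- Lemma 3.8: if `1 ≤ |R(S)| ≤ |R(V \ S)|`, every inclusion-minimal member `R'` of `R(S)`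
has `d_J(R' ∩ S, R' \ S) ≥ μ`, and a unique maximal member `R'` of `R(S)` (if one exists)
has `2 d_J((V \ R') ∩ S, (V \ R') \ S) ≥ k - 6`, then `d_J(S) ≥ k - 4`. -/
theorem degree_bound_overlapping_cut
    (J : V → V → ℕ) (hJsymm : ∀ a b, J a b = J b a)
    (k : ℤ) (μ : ℤ) (hμ : μ = ⌈((k : ℚ) - 3) / 2⌉)
    (R : Finset (Finset V)) (hlam : LaminarF R) (S : Finset V)
    (h1 : 1 ≤ (overlapFam R S).card)
    (h2 : (overlapFam R S).card ≤ (overlapFam R Sᶜ).card)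
    (hmin : ∀ A ∈ overlapFam R S, (∀ B ∈ overlapFam R S, ¬ B ⊂ A) →
      μ ≤ (dBetween J (A ∩ S) (A \ S) : ℤ))
    (hmax : ∀ A ∈ overlapFam R S, (∀ B ∈ overlapFam R S, B ⊆ A) →
      k - 6 ≤ 2 * (dBetween J (Aᶜ ∩ S) (Aᶜ \ S) : ℤ)) :
    k - 4 ≤ (degS J S : ℤ) :=
  degree_bound_overlapping_cut_general J k μ hμ R hlam S h1 hmin hmax
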